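/- Writing c = [a,b], d = [c,a] and e = [d,a] in Γ (with [x,y] = x⁻¹y⁻¹xy), the element d²e is conjugate in Γ to its inverse (d²e)⁻¹; in particular d⁴ ∈ γ₄(Γ), the fourth term of the lower central series of Γ. -/

import Mathlib

/-!
With `g = b⁻¹ * a * b`, a pure word computation valid in any group shows that
`g⁻¹ * (d² e) * g * (d² e)` is a conjugate of the commutator of `a⁻²` and `b * a⁻² * b⁻¹`.
In `Γ` these two elements commute, because of how `a ^ 2` and `b * a ^ 2 * b⁻¹` act on the two
subtrees; so `g` inverts `d² e`. Since `d ∈ γ₃` and `e ∈ γ₄`, `d² e ∈ γ₃`, hence its square, which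
equals `⁅d² e, g⁆`, lies in `γ₄`. Modulo `γ₄` this square is `d⁴`.
-/

namespace PinkGroup

mutual
  /-- forward action of the generator `a` -/
  def aF : List Bool → List Bool
    | [] => []
    | false :: w => true :: bF w
    | true :: w => false :: w
  /-- forward action of the generator `b` -/
  def bF : List Bool → List Bool
    | [] => []
    | false :: w => false :: aF w
    | true :: w => true :: w
end

mutual
  /-- inverse of `aF` -/
  def aIF : List Bool → List Bool
    | [] => []
    | true :: w => false :: bIF w
    | false :: w => true :: w
  /-- inverse of `bF` -/
  def bIF : List Bool → List Bool
    | [] => []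
    | false :: w => false :: aIF w
    | true :: w => true :: w
end

lemma inv_all (w : List Bool) :
    aF (aIF w) = w ∧ bF (bIF w) = w ∧ aIF (aF w) = w ∧ bIF (bF w) = w := by
  induction w with
  | nil => simp [aF, bF, aIF, bIF]
  | cons x w ih =>
    cases x <;>
      simp [aF, bF, aIF, bIF, ih.1, ih.2.1, ih.2.2.1, ih.2.2.2]

/-- The generator `a` of Pink's group: `(1w)^a = 2 w^b`, `(2w)^a = 1w`
(where the letter `1` is `false` and the letter `2` is `true`). -/
def a : Equiv.Perm (List Bool) :=
  ⟨aF, aIF, fun w => (inv_all w).2.2.1, fun w => (inv_all w).1⟩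

/-- The generator `b` of Pink's group: `(1w)^b = 1 w^a`, `(2w)^b = 2w`. -/
def b : Equiv.Perm (List Bool) :=
  ⟨bF, bIF, fun w => (inv_all w).2.2.2, fun w => (inv_all w).2.1⟩

/-- Pink's group `Γ`, the iterated monodromy group of `z^2 - 1`. -/
def Gam : Subgroup (Equiv.Perm (List Bool)) := Subgroup.closure {a, b}

lemma a_mem : a ∈ Gam := Subgroup.subset_closure (by simp)

lemma b_mem : b ∈ Gam := Subgroup.subset_closure (by simp)


/-- `c = [a,b] = a⁻¹b⁻¹ab` (the paper's commutator convention). -/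
def cc : Equiv.Perm (List Bool) := a⁻¹ * b⁻¹ * a * b

/-- `d = [c,a] = c⁻¹a⁻¹ca`. -/
def dd : Equiv.Perm (List Bool) := cc⁻¹ * a⁻¹ * cc * a

/-- `e = [d,a] = d⁻¹a⁻¹da`. -/
def ee : Equiv.Perm (List Bool) := dd⁻¹ * a⁻¹ * dd * a

lemma cc_mem : cc ∈ Gam :=
  mul_mem (mul_mem (mul_mem (inv_mem a_mem) (inv_mem b_mem)) a_mem) b_mem

lemma dd_mem : dd ∈ Gam :=
  mul_mem (mul_mem (mul_mem (inv_mem cc_mem) (inv_mem a_mem)) cc_mem) a_mem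

lemma a_nil : a [] = [] := rfl
lemma a_false (w : List Bool) : a (false :: w) = true :: b w := rfl
lemma a_true (w : List Bool) : a (true :: w) = false :: w := rfl
lemma b_nil : b [] = [] := rfl
lemma b_false (w : List Bool) : b (false :: w) = false :: a w := rfl
lemma b_true (w : List Bool) : b (true :: w) = true :: w := rfl
lemma a_inv_nil : a⁻¹ [] = [] := rfl
lemma a_inv_false (w : List Bool) : a⁻¹ (false :: w) = true :: w := rfl
lemma a_inv_true (w : List Bool) : a⁻¹ (true :: w) = false :: b⁻¹ w := rfl
lemma b_inv_nil : b⁻¹ [] = [] := rfl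
lemma b_inv_false (w : List Bool) : b⁻¹ (false :: w) = false :: a⁻¹ w := rfl
lemma b_inv_true (w : List Bool) : b⁻¹ (true :: w) = true :: w := rfl

/-- In wreath-recursion notation `a ^ 2 = (b, b)` and `b * a ^ 2 * b⁻¹ = (a * b * a⁻¹, b)`, while
`b = (a, 1)` and `a * b * a⁻¹ = (1, b * a * b⁻¹)` have disjoint supports; so reading two letters
of a word decides the equation. -/
theorem commute_a_sq_b_mul_a_sq_mul_b_inv : Commute (a ^ 2) (b * a ^ 2 * b⁻¹) := by
  refine Equiv.ext fun w => ?_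
  rcases w with _ | ⟨_ | _, _ | ⟨_ | _, w⟩⟩ <;>
    simp only [sq, Equiv.Perm.mul_apply, a_nil, a_false, a_true, b_nil, b_false, b_true,
      a_inv_nil, a_inv_false, a_inv_true, b_inv_nil, b_inv_false, b_inv_true]

section LowerCentralSeries

open scoped commutatorElement

variable {G : Type*} [Group G] {n : ℕ}

theorem conj_sq_mul_eq_inv_of_commute {x y c d e : G} (hc : c = x⁻¹ * y⁻¹ * x * y)
    (hd : d = c⁻¹ * x⁻¹ * c * x) (he : e = d⁻¹ * x⁻¹ * d * x)
    (h : Commute (x ^ 2) (y * x ^ 2 * y⁻¹)) :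
    (y⁻¹ * x * y)⁻¹ * (d ^ 2 * e) * (y⁻¹ * x * y) = (d ^ 2 * e)⁻¹ := by
  have hword : (y⁻¹ * x * y)⁻¹ * (d ^ 2 * e) * (y⁻¹ * x * y) * (d ^ 2 * e) =
      y⁻¹ * ⁅(x ^ 2)⁻¹, (y * x ^ 2 * y⁻¹)⁻¹⁆ * y := by
    subst hc hd he
    simp only [commutatorElement_def, pow_two, mul_inv_rev, inv_inv, mul_assoc, mul_inv_cancel_left,
      inv_mul_cancel_left, inv_mul_cancel, mul_one]
  rw [← mul_eq_one_iff_eq_inv, hword, commutatorElement_eq_one_iff_commute.2 h.inv_inv, mul_one,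
    inv_mul_cancel]

theorem inv_mul_inv_mul_mul_mem_lowerCentralSeries_succ {x : G}
    (hx : x ∈ (⊤ : Subgroup G).lowerCentralSeries n) (y : G) :
    x⁻¹ * y⁻¹ * x * y ∈ (⊤ : Subgroup G).lowerCentralSeries (n + 1) := by
  simpa [commutatorElement_def] using
    Subgroup.lowerCentralSeries_isDescendingCentralSeries.2 x⁻¹ n (inv_mem hx) y⁻¹

theorem sq_mem_lowerCentralSeries_succ_of_conj_eq_inv {x g : G}
    (hx : x ∈ (⊤ : Subgroup G).lowerCentralSeries n) (hg : g⁻¹ * x * g = x⁻¹) :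
    x ^ 2 ∈ (⊤ : Subgroup G).lowerCentralSeries (n + 1) := by
  have hsq : x ^ 2 = x * g * x⁻¹ * g⁻¹ := by
    rw [← hg, sq]
    group
  rw [hsq]
  exact Subgroup.lowerCentralSeries_isDescendingCentralSeries.2 x n hx g

theorem mul_pow_mem_iff_of_mem {N : Subgroup G} [N.Normal] {e : G} (he : e ∈ N) (y : G) (k : ℕ) :
    (y * e) ^ k ∈ N ↔ y ^ k ∈ N := by
  simp only [← QuotientGroup.eq_one_iff, QuotientGroup.mk_pow, QuotientGroup.mk_mul,
    (QuotientGroup.eq_one_iff e).2 he, mul_one]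

theorem pow_four_mem_lowerCentralSeries_succ {d e g : G}
    (hd : d ∈ (⊤ : Subgroup G).lowerCentralSeries n)
    (he : e ∈ (⊤ : Subgroup G).lowerCentralSeries (n + 1))
    (hg : g⁻¹ * (d ^ 2 * e) * g = (d ^ 2 * e)⁻¹) :
    d ^ 4 ∈ (⊤ : Subgroup G).lowerCentralSeries (n + 1) := by
  have hmem : d ^ 2 * e ∈ (⊤ : Subgroup G).lowerCentralSeries n :=
    mul_mem (pow_mem hd 2) (Subgroup.lowerCentralSeries_antitone ⊤ n.le_succ he)
  have hsq := sq_mem_lowerCentralSeries_succ_of_conj_eq_inv hmem hg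
  rwa [mul_pow_mem_iff_of_mem he, ← pow_mul] at hsq

end LowerCentralSeries

/-- The element `d²e` is conjugate in `Γ` to its inverse; in particular
`d⁴ ∈ γ₄(Γ)`, the fourth term of the lower central series of `Γ`
(here `lowerCentralSeries ↥Gam 3 = γ₄(Γ)` since `lowerCentralSeries ↥Gam 0 = γ₁(Γ) = Γ`). -/
theorem Gam_d_sq_e_conjugate_to_inverse :
    (∃ g ∈ Gam, g⁻¹ * (dd ^ 2 * ee) * g = (dd ^ 2 * ee)⁻¹) ∧
    (⟨dd, dd_mem⟩ : ↥Gam) ^ 4 ∈ (⊤ : Subgroup ↥Gam).lowerCentralSeries 3 := by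
  let A : Gam := ⟨a, a_mem⟩
  let B : Gam := ⟨b, b_mem⟩
  let C : Gam := A⁻¹ * B⁻¹ * A * B
  let D : Gam := C⁻¹ * A⁻¹ * C * A
  let E : Gam := D⁻¹ * A⁻¹ * D * A
  have hconj : (B⁻¹ * A * B)⁻¹ * (D ^ 2 * E) * (B⁻¹ * A * B) = (D ^ 2 * E)⁻¹ :=
    conj_sq_mul_eq_inv_of_commute rfl rfl rfl (Subtype.ext commute_a_sq_b_mul_a_sq_mul_b_inv)
  have hC : C ∈ (⊤ : Subgroup Gam).lowerCentralSeries 1 :=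
    inv_mul_inv_mul_mul_mem_lowerCentralSeries_succ (Subgroup.mem_top A) B
  have hD : D ∈ (⊤ : Subgroup Gam).lowerCentralSeries 2 :=
    inv_mul_inv_mul_mul_mem_lowerCentralSeries_succ hC A
  have hE : E ∈ (⊤ : Subgroup Gam).lowerCentralSeries 3 :=
    inv_mul_inv_mul_mul_mem_lowerCentralSeries_succ hD A
  exact ⟨⟨_, (B⁻¹ * A * B).2, congrArg Subtype.val hconj⟩,
    pow_four_mem_lowerCentralSeries_succ hD hE hconj⟩

end PinkGroup
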